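/- arXiv:1806.08550 — 2 statements merged into one kernel-verified Lean document; each statement's English description precedes it below -/
import Mathlib

section
/- Let T, J, L be bounded linear operators on a Hilbert space with L and J injective (nonzero), and suppose the iteration f_{j+1} = Q(f_j + L e_j) with e_j = S r − J f_j has a fixed point (f_∞, e_∞) for every r. If Q = I then e_∞ = 0; conversely, if for all r the fixed point satisfies e_∞ = 0 and f_∞ ranges over a set on which Q f = f determines Q, then Q = I. In the matrix transfer function setting with L(e^{iω}), J(e^{iω}) ≠ 0 for all ω and convergence condition ρ(Q(I−LJ)) < 1 on all frequencies: e_∞ = 0 for all r ∈ ℓ_2 if and only if Q = I. -/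
open Matrix BigOperators Classical

/-- Spectral radius of a square complex matrix: the supremum of the moduli of its eigenvalues. -/
noncomputable def specRad {n : ℕ} (A : Matrix (Fin n) (Fin n) ℂ) : ℝ :=
  sSup ((fun μ => ‖μ‖) '' spectrum ℂ A)

/-- Largest singular value: square root of the largest eigenvalue of `Aᴴ * A`. -/
noncomputable def maxSingVal {n : ℕ} (A : Matrix (Fin n) (Fin n) ℂ) : ℝ :=
  Real.sqrt (specRad (Aᴴ * A))

/-- Structured singular value w.r.t. diagonal complex perturbations. -/

noncomputable def ssv {n : ℕ} (A : Matrix (Fin n) (Fin n) ℂ) : ℝ :=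
  if (∃ Δ : Matrix (Fin n) (Fin n) ℂ, Δ.IsDiag ∧ (1 - A * Δ).det = 0) then
    (sInf {r : ℝ | ∃ Δ : Matrix (Fin n) (Fin n) ℂ,
        Δ.IsDiag ∧ (1 - A * Δ).det = 0 ∧ r = maxSingVal Δ})⁻¹
  else 0

/-!
Write `P = Q (1 - L J)`. A pair `(f, e)` is a fixed point of the iteration exactly when
`e = s - J f` and `(1 - P) f = Q L s`; the convergence condition makes `1 - P` invertible,
so a fixed point exists for every `s`.

If `Q = 1`, then `1 - P = L J` is invertible, hence so is `L`, and `f = f + L e` forces `e = 0`.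
Conversely, if `e = 0` at every fixed point, then every `s` is of the form `J f` with `Q f = f`.
So `J` is surjective, hence invertible, and every vector `f` is fixed by `Q`.
-/

theorem isUnit_one_sub_of_specRad_lt_one {n : ℕ} {A : Matrix (Fin n) (Fin n) ℂ}
    (h : specRad A < 1) : IsUnit (1 - A) := by
  by_contra hu
  have h1 : (1 : ℂ) ∈ spectrum ℂ A := by
    rw [spectrum.mem_iff]
    simpa using hu
  have hle : (1 : ℝ) ≤ specRad A :=
    le_csSup (A.finite_spectrum.image _).bddAbove ⟨1, h1, norm_one⟩
  linarith

namespace Matrix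

variable {R m : Type*} [CommRing R] [Fintype m] [DecidableEq m]

theorem eq_self_mulVec_add_iff (Q L J : Matrix m m R) (s f : m → R) :
    f = Q *ᵥ (f + L *ᵥ (s - J *ᵥ f)) ↔ (1 - Q * (1 - L * J)) *ᵥ f = (Q * L) *ᵥ s := by
  simp only [sub_mulVec, one_mulVec, mul_sub, mul_one, ← mulVec_mulVec, mulVec_add,
    mulVec_sub]
  constructor <;> intro h <;> rw [← sub_eq_zero] at h ⊢ <;> rw [← h] <;> abel

theorem exists_eq_self_mulVec_add {Q L J : Matrix m m R} (hB : IsUnit (1 - Q * (1 - L * J)))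
    (s : m → R) : ∃ f, f = Q *ᵥ (f + L *ᵥ (s - J *ᵥ f)) := by
  obtain ⟨f, hf⟩ := mulVec_surjective_iff_isUnit.2 hB ((Q * L) *ᵥ s)
  exact ⟨f, (eq_self_mulVec_add_iff Q L J s f).2 hf⟩

theorem eq_one_of_forall_exists_mulVec_eq {Q J : Matrix m m R}
    (h : ∀ s, ∃ f, J *ᵥ f = s ∧ Q *ᵥ f = f) : Q = 1 := by
  have hJ : IsUnit J := mulVec_surjective_iff_isUnit.1 fun s => (h s).imp fun _ => And.left
  refine ext_iff_mulVec.2 fun v => ?_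
  obtain ⟨f, hJf, hQf⟩ := h (J *ᵥ v)
  rw [one_mulVec, ← mulVec_injective_of_isUnit hJ hJf, hQf]

end Matrix

theorem asymptotic_error_zero_iff_Q_eq_one_general {n : ℕ}
    (Q L J : Matrix (Fin n) (Fin n) ℂ)
    (hconv : specRad (Q * (1 - L * J)) < 1) :
    (∀ s finf einf : Fin n → ℂ,
        finf = Q.mulVec (finf + L.mulVec einf) →
        einf = s - J.mulVec finf → einf = 0) ↔ Q = 1 := by
  have hB := isUnit_one_sub_of_specRad_lt_one hconv
  constructor
  · intro H
    refine eq_one_of_forall_exists_mulVec_eq (J := J) fun s => ?_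
    obtain ⟨f, hf⟩ := exists_eq_self_mulVec_add hB s
    have he : s - J *ᵥ f = 0 := H s f _ hf rfl
    refine ⟨f, (sub_eq_zero.1 he).symm, ?_⟩
    rwa [he, mulVec_zero, add_zero, eq_comm] at hf
  · rintro rfl s f e hf -
    rw [one_mul, sub_sub_cancel] at hB
    rw [one_mulVec, left_eq_add] at hf
    exact mulVec_injective_of_isUnit (isUnit_of_mul_isUnit_left hB)
      (hf.trans (mulVec_zero L).symm)

theorem asymptotic_error_zero_iff_Q_eq_one {n : ℕ}
    (Q L J : Matrix (Fin n) (Fin n) ℂ) (hL : L ≠ 0) (hJ : J ≠ 0)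
    (hconv : specRad (Q * (1 - L * J)) < 1) :
    (∀ s finf einf : Fin n → ℂ,
        finf = Q.mulVec (finf + L.mulVec einf) →
        einf = s - J.mulVec finf → einf = 0) ↔ Q = 1 :=
  asymptotic_error_zero_iff_Q_eq_one_general Q L J hconv
end

section
/- Let A be Hermitian positive semidefinite in ℂ^{n×n} and D = diag(d_i). If for every i, |d_i|^2 · μ_d(A) < 1 where μ_d is the structured singular value with respect to diagonal complex matrices, then ρ(D^H D A) < 1. -/
open Matrix BigOperators Classical

/-! If `λ ≠ 0` is an eigenvalue of `Δ * A` with `Δ = Dᴴ D` diagonal, then the diagonal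
perturbation `λ⁻¹ • Δ` makes `1 - A * (λ⁻¹ • Δ)` singular, so by definition of the structured
singular value `1 / ssv A ≤ σ̄(λ⁻¹ • Δ) = max |d_i|² / |λ|`, i.e. `|λ| ≤ max |d_i|² · ssv A < 1`.
The infimum defining `ssv A` is positive because `1 ≤ ‖A‖∞ ‖δ‖∞` for every singular diagonal
perturbation `diagonal δ`, so the junk value `0⁻¹ = 0` never occurs. -/

namespace Matrix

theorem det_one_sub_mul_smul_eq_zero_of_mem_spectrum {K ι : Type*} [Field K] [Fintype ι]
    [DecidableEq ι] {D A : Matrix ι ι K} {l : K} (hl : l ∈ spectrum K (D * A)) (hl0 : l ≠ 0) :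
    (1 - A * (l⁻¹ • D)).det = 0 := by
  have hsing : (l • 1 - D * A).det = 0 := by
    rw [spectrum.mem_iff, Algebra.algebraMap_eq_smul_one, isUnit_iff_isUnit_det,
      isUnit_iff_ne_zero, not_not] at hl
    exact hl
  have hfac : l • 1 - D * A = l • (1 - l⁻¹ • D * A) := by
    rw [smul_sub, smul_mul_assoc, smul_smul, mul_inv_cancel₀ hl0, one_smul]
  rw [hfac, det_smul] at hsing
  rw [det_one_sub_mul_comm]
  exact (mul_eq_zero.mp hsing).resolve_left (pow_ne_zero _ hl0)

open scoped Matrix.Norms.Operator in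
theorem one_le_norm_mul_norm_of_det_one_sub_mul_diagonal_eq_zero {𝕜 ι : Type*} [NormedField 𝕜]
    [Fintype ι] [DecidableEq ι] {A : Matrix ι ι 𝕜} {δ : ι → 𝕜}
    (h : (1 - A * diagonal δ).det = 0) : 1 ≤ ‖A‖ * ‖δ‖ := by
  obtain ⟨v, hv0, hv⟩ := exists_mulVec_eq_zero_iff.mpr h
  have hfix : A *ᵥ (diagonal δ *ᵥ v) = v := by
    rw [sub_mulVec, one_mulVec, sub_eq_zero, ← mulVec_mulVec] at hv
    exact hv.symm
  have hle : ‖v‖ ≤ ‖A‖ * ‖δ‖ * ‖v‖ := calc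
    ‖v‖ = ‖A *ᵥ (diagonal δ *ᵥ v)‖ := by rw [hfix]
    _ ≤ ‖A‖ * (‖diagonal δ‖ * ‖v‖) := by
      grw [linfty_opNorm_mulVec, linfty_opNorm_mulVec]
    _ = ‖A‖ * ‖δ‖ * ‖v‖ := by rw [linfty_opNorm_diagonal, mul_assoc]
  exact le_of_mul_le_mul_right (by simpa using hle) (norm_pos_iff.mpr hv0)

end Matrix

section SpectralBounds

variable {n : ℕ}

theorem specRad_diagonal (δ : Fin n → ℂ) : specRad (diagonal δ) = ‖δ‖ := by
  have hbdd : BddAbove (Set.range fun i => ‖δ i‖) := (Set.finite_range _).bddAbove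
  rw [specRad, spectrum_diagonal, ← Set.range_comp]
  refine le_antisymm (Real.sSup_le ?_ (norm_nonneg δ)) ?_
  · rintro _ ⟨i, rfl⟩
    exact norm_le_pi_norm δ i
  · refine (pi_norm_le_iff_of_nonneg (Real.sSup_nonneg ?_)).mpr fun i => le_csSup hbdd ⟨i, rfl⟩
    rintro _ ⟨i, rfl⟩
    exact norm_nonneg _

theorem maxSingVal_diagonal (δ : Fin n → ℂ) : maxSingVal (diagonal δ) = ‖δ‖ := by
  rw [maxSingVal, diagonal_conjTranspose, diagonal_mul_diagonal, ← Pi.mul_def, specRad_diagonal,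
    CStarRing.norm_star_mul_self, Real.sqrt_mul_self (norm_nonneg δ)]

theorem ssv_nonneg (A : Matrix (Fin n) (Fin n) ℂ) : 0 ≤ ssv A := by
  rw [ssv]
  split_ifs
  · refine inv_nonneg.mpr (Real.sInf_nonneg ?_)
    rintro _ ⟨Δ, -, -, rfl⟩
    exact Real.sqrt_nonneg _
  · exact le_rfl

open scoped Matrix.Norms.Operator in
theorem ssv_pos_and_inv_le_maxSingVal {A Δ : Matrix (Fin n) (Fin n) ℂ} (hΔ : Δ.IsDiag)
    (h : (1 - A * Δ).det = 0) : 0 < ssv A ∧ (ssv A)⁻¹ ≤ maxSingVal Δ := by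
  set S := {r : ℝ | ∃ Δ : Matrix (Fin n) (Fin n) ℂ,
    Δ.IsDiag ∧ (1 - A * Δ).det = 0 ∧ r = maxSingVal Δ}
  have hΔS : maxSingVal Δ ∈ S := ⟨Δ, hΔ, h, rfl⟩
  have hlower : ∀ r ∈ S, 1 ≤ ‖A‖ * r := by
    rintro _ ⟨Δ', hΔ', h', rfl⟩
    rw [← hΔ'.diagonal_diag] at h' ⊢
    rw [maxSingVal_diagonal]
    exact one_le_norm_mul_norm_of_det_one_sub_mul_diagonal_eq_zero h'
  have hA : 0 < ‖A‖ := pos_of_mul_pos_left (one_pos.trans_le (hlower _ hΔS)) (Real.sqrt_nonneg _)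
  have hbound : ∀ r ∈ S, ‖A‖⁻¹ ≤ r := fun r hr => by
    rw [inv_le_iff_one_le_mul₀' hA]; exact hlower r hr
  rw [ssv, if_pos ⟨Δ, hΔ, h⟩, inv_inv]
  exact ⟨inv_pos.mpr ((inv_pos.mpr hA).trans_le (le_csInf ⟨_, hΔS⟩ hbound)),
    csInf_le ⟨_, hbound⟩ hΔS⟩

theorem norm_le_norm_mul_ssv_of_mem_spectrum {δ : Fin n → ℂ} {A : Matrix (Fin n) (Fin n) ℂ}
    {l : ℂ} (hl : l ∈ spectrum ℂ (diagonal δ * A)) : ‖l‖ ≤ ‖δ‖ * ssv A := by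
  rcases eq_or_ne l 0 with rfl | hl0
  · simpa using mul_nonneg (norm_nonneg δ) (ssv_nonneg A)
  have hsing := det_one_sub_mul_smul_eq_zero_of_mem_spectrum hl hl0
  rw [← diagonal_smul] at hsing
  obtain ⟨hpos, hle⟩ := ssv_pos_and_inv_le_maxSingVal (isDiag_diagonal _) hsing
  rw [maxSingVal_diagonal, norm_smul, norm_inv, inv_le_iff_one_le_mul₀' hpos] at hle
  have hl' : 0 < ‖l‖ := norm_pos_iff.mpr hl0
  calc ‖l‖ ≤ ‖l‖ * (ssv A * (‖l‖⁻¹ * ‖δ‖)) := le_mul_of_one_le_right hl'.le hle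
    _ = ‖δ‖ * ssv A := by field_simp

theorem specRad_diagonal_mul_le (δ : Fin n → ℂ) (A : Matrix (Fin n) (Fin n) ℂ) :
    specRad (diagonal δ * A) ≤ ‖δ‖ * ssv A :=
  Real.sSup_le (by rintro _ ⟨l, hl, rfl⟩; exact norm_le_norm_mul_ssv_of_mem_spectrum hl)
    (mul_nonneg (norm_nonneg δ) (ssv_nonneg A))

end SpectralBounds

theorem sq_norm_mul_lt_one {n : ℕ} {d : Fin n → ℂ} {c : ℝ} (hc : 0 ≤ c)
    (h : ∀ i, ‖d i‖ ^ 2 * c < 1) : ‖d‖ ^ 2 * c < 1 := by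
  rcases isEmpty_or_nonempty (Fin n) with hn | hn
  · simp [Subsingleton.elim d 0]
  obtain ⟨i₀, hi₀⟩ := Finite.exists_max fun i => ‖d i‖
  have hd : ‖d‖ ≤ ‖d i₀‖ := (pi_norm_le_iff_of_nonneg (norm_nonneg _)).mpr hi₀
  calc ‖d‖ ^ 2 * c ≤ ‖d i₀‖ ^ 2 * c := by gcongr
    _ < 1 := h i₀

open ComplexOrder in
theorem ssv_monotonic_convergence_general {n : ℕ}
    (A : Matrix (Fin n) (Fin n) ℂ) (d : Fin n → ℂ)
    (h : ∀ i, ‖d i‖ ^ 2 * ssv A < 1) :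
    specRad ((Matrix.diagonal d)ᴴ * Matrix.diagonal d * A) < 1 := by
  have hD : (diagonal d)ᴴ * diagonal d = diagonal (star d * d) := by
    rw [diagonal_conjTranspose, diagonal_mul_diagonal, Pi.mul_def]
  calc specRad ((diagonal d)ᴴ * diagonal d * A) ≤ ‖d‖ ^ 2 * ssv A := by
        simpa only [hD, CStarRing.norm_star_mul_self, sq] using specRad_diagonal_mul_le (star d * d) A
    _ < 1 := sq_norm_mul_lt_one (ssv_nonneg A) h

open ComplexOrder in
theorem ssv_monotonic_convergence {n : ℕ}
    (A : Matrix (Fin n) (Fin n) ℂ) (hA : A.PosSemidef) (d : Fin n → ℂ)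
    (h : ∀ i, ‖d i‖ ^ 2 * ssv A < 1) :
    specRad ((Matrix.diagonal d)ᴴ * Matrix.diagonal d * A) < 1 :=
  ssv_monotonic_convergence_general A d h
end
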